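/- arXiv:1803.05167 — 5 statements merged into one kernel-verified Lean document; each statement's English description precedes it below -/
import Mathlib

section
/- Let B be a feasible basis of the standard-form LP with associated basic feasible solution x, let N be the complement of B, and let c̄_N = c_N − A_Nᵀ(A_Bᵀ)⁻¹c_B be the reduced cost vector. Suppose min_{j∈N} c̄_j ≤ 0 and set Δ = −min_{j∈N} c̄_j. Let x* be an optimal solution of the LP (i.e., x* is feasible and c·x* ≤ c·x' for every feasible x') which has at most m positive entries, each entry of x* being at most γ. Then c·x* ≥ c·x − m·γ·Δ. -/
open Matrix

/-- **Lemma 1 (Kitahara–Mizuno).** Let `B` be a feasible basis (given by an injective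
`β : Fin m → Fin n` with invertible submatrix) with associated basic feasible solution `x`,
and let `c̄` be the reduced cost. If `min_{j ∉ range β} c̄ j = -Δ ≤ 0` and `x*` is an optimal
solution with at most `m` positive entries, each at most `γ`, then
`c ⬝ x* ≥ c ⬝ x - m * γ * Δ`. -/
theorem lower_bound_of_optimal_value
    {m n : ℕ} (A : Matrix (Fin m) (Fin n) ℝ) (b : Fin m → ℝ) (c : Fin n → ℝ)
    (β : Fin m → Fin n) (hβ : Function.Injective β)
    (hB : IsUnit (A.submatrix id β))
    (x : Fin n → ℝ)
    (hxB : ∀ k, x (β k) = (A.submatrix id β)⁻¹.mulVec b k)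
    (hxN : ∀ j, j ∉ Set.range β → x j = 0)
    (hx0 : ∀ j, 0 ≤ x j)
    (Δ : ℝ)
    (hmin : IsLeast
      ((fun j => c j -
        (fun i => A i j) ⬝ᵥ ((A.submatrix id β).transpose⁻¹.mulVec (fun k => c (β k)))) ''
        {j | j ∉ Set.range β})
      (-Δ))
    (hmin0 : -Δ ≤ 0)
    (γ : ℝ)
    (xstar : Fin n → ℝ)
    (hfeas : A.mulVec xstar = b ∧ ∀ j, 0 ≤ xstar j)
    (hopt : ∀ x' : Fin n → ℝ, A.mulVec x' = b → (∀ j, 0 ≤ x' j) → c ⬝ᵥ xstar ≤ c ⬝ᵥ x')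
    (hcard : (Finset.univ.filter (fun j => 0 < xstar j)).card ≤ m)
    (hγ : ∀ j, xstar j ≤ γ) :
    c ⬝ᵥ xstar ≥ c ⬝ᵥ x - m * γ * Δ := by
  set Bm := A.submatrix id β with hBm
  set y := Bm.transpose⁻¹.mulVec (fun k => c (β k)) with hy
  set cb : Fin n → ℝ := fun j => c j - (fun i => A i j) ⬝ᵥ y with hcb
  have hdet : IsUnit Bm.det := (Matrix.isUnit_iff_isUnit_det Bm).mp hB
  -- γ and Δ are nonneg
  have hΔ : 0 ≤ Δ := by linarith
  obtain ⟨j₀, hj₀, hj₀eq⟩ := hmin.1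
  have hγ0 : 0 ≤ γ := le_trans (hfeas.2 j₀) (hγ j₀)
  -- the value of x equals y ⬝ᵥ b
  have himg : ∀ g : Fin n → ℝ, ∑ j ∈ Finset.univ.image β, g j = ∑ k, g (β k) :=
    fun g => Finset.sum_image (fun a _ b _ h => hβ h)
  have hcx : c ⬝ᵥ x = y ⬝ᵥ b := by
    have h1 : c ⬝ᵥ x = ∑ k, c (β k) * (Bm⁻¹.mulVec b k) := by
      rw [dotProduct,
        ← Finset.sum_subset (Finset.subset_univ (Finset.univ.image β))
          (fun j _ hj => by
            have : x j = 0 := hxN j fun ⟨k, hk⟩ =>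
              hj (Finset.mem_image.mpr ⟨k, Finset.mem_univ _, hk⟩)
            simp [this]),
        himg]
      exact Finset.sum_congr rfl fun k _ => by rw [hxB k]
    have h2 : (fun k => c (β k)) ⬝ᵥ Bm⁻¹.mulVec b = y ⬝ᵥ b := by
      rw [Matrix.dotProduct_mulVec, ← Matrix.mulVec_transpose,
        Matrix.transpose_nonsing_inv]
    rw [h1, ← h2, dotProduct]
  -- key identity for feasible points
  have key : ∀ x' : Fin n → ℝ, A.mulVec x' = b →
      c ⬝ᵥ x' = y ⬝ᵥ b + ∑ j, cb j * x' j := by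
    intro x' hx'
    have h4 : ∑ j, ((fun i => A i j) ⬝ᵥ y) * x' j = y ⬝ᵥ b := by
      calc ∑ j, ((fun i => A i j) ⬝ᵥ y) * x' j
          = ∑ j, ∑ i, (A i j * y i) * x' j := by
            simp [dotProduct, Finset.sum_mul]
        _ = ∑ i, ∑ j, (A i j * y i) * x' j := Finset.sum_comm
        _ = ∑ i, y i * ∑ j, A i j * x' j := by
            refine Finset.sum_congr rfl fun i _ => ?_
            rw [Finset.mul_sum]
            exact Finset.sum_congr rfl fun j _ => by ring
        _ = ∑ i, y i * b i := by
            refine Finset.sum_congr rfl fun i _ => ?_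
            have := congrFun hx' i
            simp only [Matrix.mulVec, dotProduct] at this
            rw [this]
        _ = y ⬝ᵥ b := rfl
    have h3 : ∑ j, cb j * x' j = c ⬝ᵥ x' - y ⬝ᵥ b := by
      simp only [hcb, sub_mul]
      rw [Finset.sum_sub_distrib, h4]; rfl
    rw [h3]; ring
  -- reduced costs of basic columns vanish
  have hcbB : ∀ k, cb (β k) = 0 := by
    intro k
    have hmul : Bmᵀ.mulVec y = fun k => c (β k) := by
      rw [hy, Matrix.mulVec_mulVec,
        Matrix.mul_nonsing_inv _ (by rwa [Matrix.det_transpose]), Matrix.one_mulVec]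
    have h6 := congrFun hmul k
    have h5 : (fun i => A i (β k)) ⬝ᵥ y = Bmᵀ.mulVec y k := by
      simp [Matrix.mulVec, dotProduct, Matrix.transpose, hBm, Matrix.submatrix]
    simp only [hcb, h5, h6, sub_self]
  set S := Finset.univ.filter (fun j => 0 < xstar j) with hS
  have hsum : ∑ j, cb j * xstar j = ∑ j ∈ S, cb j * xstar j :=
    (Finset.sum_subset (Finset.subset_univ S) (fun j _ hj => by
      have hle : xstar j ≤ 0 := not_lt.mp (by simpa [hS] using hj)
      have : xstar j = 0 := le_antisymm hle (hfeas.2 j)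
      simp [this])).symm
  have hterm : ∀ j ∈ S, -(γ * Δ) ≤ cb j * xstar j := by
    intro j _
    by_cases hjB : j ∈ Set.range β
    · obtain ⟨k, rfl⟩ := hjB
      rw [hcbB k, zero_mul]
      nlinarith [mul_nonneg hγ0 hΔ]
    · have h6 : -Δ ≤ cb j := hmin.2 ⟨j, hjB, rfl⟩
      have h7 : 0 ≤ xstar j := hfeas.2 j
      have h8 : xstar j ≤ γ := hγ j
      nlinarith
  have hSsum : (S.card : ℝ) * (-(γ * Δ)) ≤ ∑ j ∈ S, cb j * xstar j := by
    have := Finset.card_nsmul_le_sum S _ _ hterm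
    simpa [nsmul_eq_mul] using this
  have hScard : (S.card : ℝ) ≤ m := by exact_mod_cast hcard
  have hfinal := key xstar hfeas.1
  rw [ge_iff_le, hcx, hfinal]
  have hneg : -(γ * Δ) ≤ 0 := by nlinarith [mul_nonneg hγ0 hΔ]
  have hmm : (m : ℝ) * (-(γ * Δ)) ≤ (S.card : ℝ) * (-(γ * Δ)) :=
    mul_le_mul_of_nonpos_right hScard hneg
  have hlow : -((m : ℝ) * γ * Δ) ≤ ∑ j, cb j * xstar j := by
    rw [hsum]
    calc -((m : ℝ) * γ * Δ) = (m : ℝ) * (-(γ * Δ)) := by ring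
      _ ≤ (S.card : ℝ) * (-(γ * Δ)) := hmm
      _ ≤ _ := hSsum
  linarith
end

section
/- Let x be a feasible solution of the standard-form LP having at most m positive entries. Let y* ∈ ℝ^m and s* ∈ ℝ^n satisfy Aᵀy* + s* = c and s* ≥ 0, and set z* = b·y*. If c·x > z*, then there exists an index j̄ with x_{j̄} > 0 and s*_{j̄} ≥ (c·x − z*)/(m·x_{j̄}). -/
open Matrix

/-- **Lemma 4, first part.** If `x` is feasible with at most `m` positive entries,
`(y*, s*)` is dual feasible with `z* = b⬝y*`, and `c⬝x > z*`, then some index `j̄` has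
`x j̄ > 0` and `s* j̄ ≥ (c⬝x − z*)/(m · x j̄)`. -/
theorem exists_large_dual_slack
    {m n : ℕ} (A : Matrix (Fin m) (Fin n) ℝ) (b : Fin m → ℝ) (c : Fin n → ℝ)
    (x : Fin n → ℝ) (hfeas : A.mulVec x = b ∧ ∀ j, 0 ≤ x j)
    (hcard : (Finset.univ.filter (fun j => 0 < x j)).card ≤ m)
    (ystar : Fin m → ℝ) (sstar : Fin n → ℝ)
    (hdual : ∀ j, (A.transpose.mulVec ystar) j + sstar j = c j)
    (hs : ∀ j, 0 ≤ sstar j)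
    (zstar : ℝ) (hzstar : zstar = b ⬝ᵥ ystar)
    (hgap : c ⬝ᵥ x > zstar) :
    ∃ jbar : Fin n, 0 < x jbar ∧ sstar jbar ≥ (c ⬝ᵥ x - zstar) / (m * x jbar) := by
  obtain ⟨hAx, hx⟩ := hfeas
  set S := Finset.univ.filter (fun j => 0 < x j) with hS
  -- key identity: c⬝ᵥx - zstar = sstar ⬝ᵥ x
  have hkey : c ⬝ᵥ x - zstar = sstar ⬝ᵥ x := by
    have hc : c ⬝ᵥ x = (A.transpose.mulVec ystar) ⬝ᵥ x + sstar ⬝ᵥ x := by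
      simp only [dotProduct, ← Finset.sum_add_distrib]
      exact Finset.sum_congr rfl fun j _ => by rw [← hdual j]; ring
    have h2 : (A.transpose.mulVec ystar) ⬝ᵥ x = zstar := by
      rw [mulVec_transpose, ← dotProduct_mulVec, hAx, hzstar, dotProduct_comm]
    rw [hc, h2]; ring
  have hsum : sstar ⬝ᵥ x = ∑ j ∈ S, sstar j * x j := by
    rw [dotProduct]
    refine (Finset.sum_subset (Finset.subset_univ S) ?_).symm
    intro j _ hj
    have : ¬ 0 < x j := by simpa [hS] using hj
    have : x j = 0 := le_antisymm (not_lt.mp this) (hx j)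
    simp [this]
  have hgap' : (0:ℝ) < c ⬝ᵥ x - zstar := by linarith
  have hSne : S.Nonempty := by
    by_contra h
    rw [Finset.not_nonempty_iff_eq_empty] at h
    rw [hkey, hsum, h] at hgap'
    simp at hgap'
  have hScard : (0:ℝ) < S.card := by
    exact_mod_cast Finset.card_pos.mpr hSne
  have hm : (0:ℝ) < m := lt_of_lt_of_le hScard (by exact_mod_cast hcard)
  -- exists j in S with sstar j * x j ≥ (c⬝ᵥx - zstar)/S.card
  have havg : ∑ j ∈ S, (c ⬝ᵥ x - zstar) / S.card ≤ ∑ j ∈ S, sstar j * x j := by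
    rw [Finset.sum_const, nsmul_eq_mul, mul_div_cancel₀ _ (ne_of_gt hScard),
      ← hsum, ← hkey]
  obtain ⟨j, hjS, hj⟩ := Finset.exists_le_of_sum_le hSne havg
  have hxj : 0 < x j := by simpa [hS] using hjS
  refine ⟨j, hxj, ?_⟩
  have h1 : (c ⬝ᵥ x - zstar) / m ≤ (c ⬝ᵥ x - zstar) / S.card :=
    div_le_div_of_nonneg_left hgap'.le hScard (by exact_mod_cast hcard)
  have h2 : (c ⬝ᵥ x - zstar) / m ≤ sstar j * x j := le_trans h1 hj
  rw [ge_iff_le, div_le_iff₀ (by positivity)]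
  calc c ⬝ᵥ x - zstar = ((c ⬝ᵥ x - zstar) / m) * m := by field_simp
    _ ≤ (sstar j * x j) * m := by nlinarith
    _ = sstar j * (↑m * x j) := by ring
end

section
/- Let z*, ρ, δ, γ be reals with 0 < ρ < 1 and 0 < δ ≤ γ, let m ≥ 1 be an integer with m·γ/δ > 1, and let (x^k)_{k≥0} be a sequence of vectors in ℝ^n whose gaps g_k (given reals with g_k = c·x^k − z*) satisfy g_{k+1} ≤ (1 − ρ)·g_k for all k and g_t > 0 for a fixed index t. Suppose the index j̄ satisfies 0 < x^t_{j̄} ≤ γ and x^{t+r}_{j̄} ≤ m·x^t_{j̄}·g_{t+r}/g_t for every integer r ≥ 0. Then x^{t+r}_{j̄} ≤ m·γ·(1 − ρ)^r for every r ≥ 0. Moreover, if additionally every strictly positive entry of x^{t+r} is at least δ, x^{t+r}_{j̄} ≥ 0, and r ≥ 1 with r ≥ (1/ρ)·log(m·γ/δ), then x^{t+r}_{j̄} = 0. -/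
/-! The contraction gives `g (t + r) ≤ (1 - ρ)^r g t`, so Lemma 4 bounds `x^{t+r} j̄` by
`m γ (1 - ρ)^r ≤ m γ e^{-ρ r}`, which drops below `δ` once `r ≥ (1/ρ) log (m γ / δ)`.
A nonnegative entry smaller than the least positive entry `δ` must vanish. -/

lemma mul_one_sub_pow_lt_one {ρ K : ℝ} (hρ0 : 0 < ρ) (hρ1 : ρ < 1) (hK : 0 < K) {r : ℕ}
    (hr : 1 ≤ r) (hlog : (1 / ρ) * Real.log K ≤ r) : K * (1 - ρ) ^ r < 1 := by
  have hpow : (1 - ρ) ^ r < Real.exp (-ρ) ^ r :=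
    pow_lt_pow_left₀ (Real.one_sub_lt_exp_neg hρ0.ne') (by linarith) (by omega)
  have hexp : Real.exp (-ρ) ^ r ≤ K⁻¹ := by
    rw [← Real.exp_nat_mul, ← Real.exp_log (inv_pos.mpr hK), Real.exp_le_exp, Real.log_inv,
      mul_neg, neg_le_neg_iff]
    rwa [one_div_mul_eq_div, div_le_iff₀ hρ0] at hlog
  calc K * (1 - ρ) ^ r < K * K⁻¹ := by gcongr; exact hpow.trans_le hexp
    _ = 1 := mul_inv_cancel₀ hK.ne'

lemma eq_zero_of_nonneg_of_lt_of_forall_pos_le {a δ : ℝ} (ha : 0 ≤ a) (hδ : a < δ)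
    (hpos : 0 < a → δ ≤ a) : a = 0 :=
  ha.eq_or_lt.elim Eq.symm fun h => absurd (hpos h) (not_le.mpr hδ)

theorem variable_fixing_general
    {n : ℕ} (ρ δ γ : ℝ)
    (hρ0 : 0 < ρ) (hρ1 : ρ < 1) (hδ : 0 < δ)
    (m : ℕ) (hmγδ : 1 < (m : ℝ) * γ / δ)
    (x : ℕ → Fin n → ℝ) (g : ℕ → ℝ)
    (hcontr : ∀ k, g (k + 1) ≤ (1 - ρ) * g k)
    (t : ℕ) (hgt : 0 < g t)
    (jbar : Fin n) (hj1 : 0 < x t jbar) (hj2 : x t jbar ≤ γ)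
    (hlem4 : ∀ r : ℕ, x (t + r) jbar ≤ m * x t jbar * g (t + r) / g t) :
    (∀ r : ℕ, x (t + r) jbar ≤ (m : ℝ) * γ * (1 - ρ) ^ r) ∧
    (∀ r : ℕ, (∀ j, 0 < x (t + r) j → δ ≤ x (t + r) j) → 0 ≤ x (t + r) jbar →
      1 ≤ r → (1 / ρ) * Real.log ((m : ℝ) * γ / δ) ≤ (r : ℝ) → x (t + r) jbar = 0) := by
  have hgap (r : ℕ) : g (t + r) ≤ (1 - ρ) ^ r * g t :=
    le_geom (u := fun k => g (t + k)) (by linarith) r fun k _ => hcontr (t + k)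
  have hbound (r : ℕ) : x (t + r) jbar ≤ (m : ℝ) * γ * (1 - ρ) ^ r :=
    calc x (t + r) jbar ≤ m * x t jbar * g (t + r) / g t := hlem4 r
      _ ≤ m * x t jbar * ((1 - ρ) ^ r * g t) / g t := by gcongr; exact hgap r
      _ = m * x t jbar * (1 - ρ) ^ r := by field_simp
      _ ≤ m * γ * (1 - ρ) ^ r := by gcongr
  refine ⟨hbound, fun r hmin hnn hr hlog => ?_⟩
  have hsmall : (m : ℝ) * γ * (1 - ρ) ^ r < δ := by
    have := mul_one_sub_pow_lt_one hρ0 hρ1 (by linarith) hr hlog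
    rwa [div_mul_eq_mul_div, div_lt_one hδ] at this
  exact eq_zero_of_nonneg_of_lt_of_forall_pos_le hnn ((hbound r).trans_lt hsmall) (hmin jbar)

/-- **Variable-fixing step in Theorem 5.** If the gaps `g k = c⬝x^k − z*` contract by the
factor `1 − ρ`, `g t > 0`, and `j̄` satisfies `0 < x^t j̄ ≤ γ` together with the conclusion
of Lemma 4, then `x^{t+r} j̄ ≤ m·γ·(1−ρ)^r` for all `r ≥ 0`; moreover if every positive
entry of `x^{t+r}` is at least `δ`, `x^{t+r} j̄ ≥ 0` and `r ≥ max(1, (1/ρ)·log(mγ/δ))`,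
then `x^{t+r} j̄ = 0`. -/
theorem variable_fixing
    {n : ℕ} (c : Fin n → ℝ) (zstar ρ δ γ : ℝ)
    (hρ0 : 0 < ρ) (hρ1 : ρ < 1) (hδ : 0 < δ) (hδγ : δ ≤ γ)
    (m : ℕ) (hm : 1 ≤ m) (hmγδ : 1 < (m : ℝ) * γ / δ)
    (x : ℕ → Fin n → ℝ) (g : ℕ → ℝ) (hg : ∀ k, g k = c ⬝ᵥ x k - zstar)
    (hcontr : ∀ k, g (k + 1) ≤ (1 - ρ) * g k)
    (t : ℕ) (hgt : 0 < g t)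
    (jbar : Fin n) (hj1 : 0 < x t jbar) (hj2 : x t jbar ≤ γ)
    (hlem4 : ∀ r : ℕ, x (t + r) jbar ≤ m * x t jbar * g (t + r) / g t) :
    (∀ r : ℕ, x (t + r) jbar ≤ (m : ℝ) * γ * (1 - ρ) ^ r) ∧
    (∀ r : ℕ, (∀ j, 0 < x (t + r) j → δ ≤ x (t + r) j) → 0 ≤ x (t + r) jbar →
      1 ≤ r → (1 / ρ) * Real.log ((m : ℝ) * γ / δ) ≤ (r : ℝ) → x (t + r) jbar = 0) :=
  variable_fixing_general ρ δ γ hρ0 hρ1 hδ m hmγδ x g hcontr t hgt jbar hj1 hj2 hlem4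
end

section
/- Let p ≥ 1 be a real number. Consider a standard-form LP with m constraints and n variables that attains its optimal value z*, is nondegenerate in the sense that every BFS has exactly m strictly positive entries each lying in [δ, γ] (0 < δ ≤ γ), and admits y* ∈ ℝ^m, s* ∈ ℝ^n with Aᵀy* + s* = c, s* ≥ 0 and b·y* = z*. Suppose ρ := δ²/(m^{1+1/p}·γ²) ∈ (0,1), and let (x^t)_{t≥0} be a sequence of BFSs with c·x^{t+1} ≤ c·x^t for all t and c·x^{t+1} − z* ≤ (1 − ρ)·(c·x^t − z*) whenever c·x^t > z*. Then there exists t ≤ (n − m)·⌈m^{1+1/p}·(γ²/δ²)·log(m·γ/δ)⌉ with c·x^t = z*. -/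
open Matrix

/-- A basic feasible solution of the standard-form LP `min c⬝x s.t. Ax = b, x ≥ 0`. -/
def IsBFS {m n : ℕ} (A : Matrix (Fin m) (Fin n) ℝ) (b : Fin m → ℝ) (x : Fin n → ℝ) : Prop :=
  (∃ β : Fin m → Fin n, Function.Injective β ∧ IsUnit (A.submatrix id β) ∧
    (∀ k, x (β k) = (A.submatrix id β)⁻¹.mulVec b k) ∧
    (∀ j, j ∉ Set.range β → x j = 0)) ∧
  (∀ j, 0 ≤ x j)

set_option maxHeartbeats 1000000 in
lemma mulVec_support_subset {m n : ℕ} (A : Matrix (Fin m) (Fin n) ℝ)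
    (β : Fin m → Fin n) (hβ : Function.Injective β) (x : Fin n → ℝ)
    (hx : ∀ j, j ∉ Set.range β → x j = 0) :
    A.mulVec x = (A.submatrix id β).mulVec (x ∘ β) := by
  ext i
  simp only [Matrix.mulVec, dotProduct, Matrix.submatrix_apply, id_eq,
    Function.comp_apply]
  rw [← Finset.sum_image (f := fun j => A i j * x j)
    (g := β) (s := Finset.univ) (fun a _ b _ h => hβ h)]
  refine (Finset.sum_subset (Finset.subset_univ _) ?_).symm
  intro j _ hj
  rw [hx j, mul_zero]
  intro ⟨k, hk⟩
  exact hj (Finset.mem_image.mpr ⟨k, Finset.mem_univ k, hk⟩)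

lemma inv_basis_vec {m n : ℕ} (A : Matrix (Fin m) (Fin n) ℝ) (b : Fin m → ℝ)
    (β : Fin m → Fin n) (hβ : Function.Injective β)
    (hu : IsUnit (A.submatrix id β)) (x : Fin n → ℝ)
    (hx : ∀ j, j ∉ Set.range β → x j = 0) (hAx : A.mulVec x = b) :
    x ∘ β = (A.submatrix id β)⁻¹.mulVec b := by
  have h1 : (A.submatrix id β).mulVec (x ∘ β) = b := by
    rw [← mulVec_support_subset A β hβ x hx]; exact hAx
  have hdet := (Matrix.isUnit_iff_isUnit_det _).mp hu
  calc x ∘ β = ((A.submatrix id β)⁻¹ * (A.submatrix id β)).mulVec (x ∘ β) := by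
        rw [Matrix.nonsing_inv_mul _ hdet, Matrix.one_mulVec]
    _ = (A.submatrix id β)⁻¹.mulVec b := by rw [← Matrix.mulVec_mulVec, h1]

lemma bfs_feasible {m n : ℕ} {A : Matrix (Fin m) (Fin n) ℝ} {b : Fin m → ℝ}
    {x : Fin n → ℝ} (h : IsBFS A b x) : A.mulVec x = b := by
  obtain ⟨⟨β, hβ, hu, hval, hzero⟩, _⟩ := h
  rw [mulVec_support_subset A β hβ x hzero]
  have hdet := (Matrix.isUnit_iff_isUnit_det _).mp hu
  have hxβ : x ∘ β = (A.submatrix id β)⁻¹.mulVec b := funext hval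
  rw [hxβ, Matrix.mulVec_mulVec, Matrix.mul_nonsing_inv _ hdet, Matrix.one_mulVec]

lemma gap_formula {m n : ℕ} (A : Matrix (Fin m) (Fin n) ℝ) (b : Fin m → ℝ)
    (c : Fin n → ℝ) (ystar : Fin m → ℝ) (sstar : Fin n → ℝ)
    (hdual : ∀ j, (A.transpose.mulVec ystar) j + sstar j = c j)
    (x : Fin n → ℝ) (hx : A.mulVec x = b) :
    c ⬝ᵥ x = b ⬝ᵥ ystar + sstar ⬝ᵥ x := by
  have hc : c = A.transpose.mulVec ystar + sstar := by
    funext j; exact (hdual j).symm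
  rw [hc, add_dotProduct, Matrix.mulVec_transpose,
    ← Matrix.dotProduct_mulVec, hx, dotProduct_comm]

set_option maxHeartbeats 2000000 in
/-- **Theorem 7.** For a nondegenerate LP attaining its optimal value and admitting a dual
optimal pair, a sequence of BFSs with nonincreasing objective values contracting by the
factor `1 − δ²/(m^{1+1/p}·γ²)` reaches the optimal value within
`(n − m)·⌈m^{1+1/p}·(γ²/δ²)·log(mγ/δ)⌉` steps. -/
theorem iterations_bound_pnorm_objective_free
    (p : ℝ) (hp : 1 ≤ p)
    {m n : ℕ} (A : Matrix (Fin m) (Fin n) ℝ) (b : Fin m → ℝ) (c : Fin n → ℝ)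
    (zstar : ℝ)
    (hz : IsLeast {v : ℝ | ∃ x : Fin n → ℝ, (A.mulVec x = b ∧ ∀ j, 0 ≤ x j) ∧ v = c ⬝ᵥ x} zstar)
    (δ γ : ℝ) (hδ : 0 < δ) (hδγ : δ ≤ γ)
    (hnd : ∀ x : Fin n → ℝ, IsBFS A b x →
      (Finset.univ.filter (fun j => 0 < x j)).card = m ∧
      ∀ j, 0 < x j → δ ≤ x j ∧ x j ≤ γ)
    (ystar : Fin m → ℝ) (sstar : Fin n → ℝ)
    (hdual : ∀ j, (A.transpose.mulVec ystar) j + sstar j = c j)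
    (hs : ∀ j, 0 ≤ sstar j) (hby : b ⬝ᵥ ystar = zstar)
    (hρ0 : 0 < δ ^ 2 / ((m : ℝ) ^ (1 + 1 / p) * γ ^ 2))
    (hρ1 : δ ^ 2 / ((m : ℝ) ^ (1 + 1 / p) * γ ^ 2) < 1)
    (x : ℕ → Fin n → ℝ) (hbfs : ∀ t, IsBFS A b (x t))
    (hmono : ∀ t, c ⬝ᵥ x (t + 1) ≤ c ⬝ᵥ x t)
    (hcontr : ∀ t, zstar < c ⬝ᵥ x t →
      c ⬝ᵥ x (t + 1) - zstar ≤
        (1 - δ ^ 2 / ((m : ℝ) ^ (1 + 1 / p) * γ ^ 2)) * (c ⬝ᵥ x t - zstar)) :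
    ∃ t ≤ (n - m) * ⌈(m : ℝ) ^ (1 + 1 / p) * (γ ^ 2 / δ ^ 2) *
        Real.log ((m : ℝ) * γ / δ)⌉₊,
      c ⬝ᵥ x t = zstar := by
  by_contra hcon
  push_neg at hcon
  set M : ℝ := (m : ℝ) ^ (1 + 1 / p) with hMdef
  set ρ : ℝ := δ ^ 2 / (M * γ ^ 2) with hρdef
  set N : ℕ := ⌈M * (γ ^ 2 / δ ^ 2) * Real.log ((m : ℝ) * γ / δ)⌉₊ with hNdef
  set T : ℕ := (n - m) * N with hTdef
  have hγ : 0 < γ := lt_of_lt_of_le hδ hδγ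
  have hp0 : 0 < p := lt_of_lt_of_le one_pos hp
  -- m is positive
  have hm0 : 0 < m := by
    rcases Nat.eq_zero_or_pos m with h | h
    · exfalso
      rw [hρdef, hMdef, h, Nat.cast_zero, Real.zero_rpow (by positivity), zero_mul,
        div_zero] at hρ0
      exact lt_irrefl 0 hρ0
    · exact h
  have hm0' : (0:ℝ) < (m:ℝ) := by exact_mod_cast hm0
  have hM0 : 0 < M := Real.rpow_pos_of_pos hm0' _
  -- 1 < m γ / δ
  have hmγδ : 1 < (m : ℝ) * γ / δ := by
    rw [lt_div_iff₀ hδ, one_mul]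
    rcases Nat.lt_or_ge m 2 with h | h
    · interval_cases m
      · -- m = 1 case: δ < γ from hρ1
        have hM1 : M = 1 := by rw [hMdef]; norm_num
        rw [hρdef, hM1, one_mul, div_lt_one (by positivity)] at hρ1
        have : δ < γ := by nlinarith
        push_cast; linarith
    · have : (2:ℝ) ≤ (m:ℝ) := by exact_mod_cast h
      nlinarith
  have hlog : 0 < Real.log ((m : ℝ) * γ / δ) := Real.log_pos hmγδ
  have hN1 : 1 ≤ N := Nat.one_le_ceil_iff.mpr (by positivity)
  -- m ≤ n
  have hmn : m ≤ n := by
    obtain ⟨⟨β, hβ, _, _, _⟩, _⟩ := hbfs 0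
    have := Fintype.card_le_of_injective β hβ
    simpa using this
  -- feasibility, gap formula, positivity and monotonicity
  have hfeas : ∀ t, A.mulVec (x t) = b := fun t => bfs_feasible (hbfs t)
  have hgap : ∀ t, c ⬝ᵥ x t = zstar + sstar ⬝ᵥ x t := fun t => by
    rw [gap_formula A b c ystar sstar hdual (x t) (hfeas t), hby]
  have hge : ∀ t, zstar ≤ c ⬝ᵥ x t := fun t =>
    hz.2 ⟨x t, ⟨hfeas t, (hbfs t).2⟩, rfl⟩
  have hpos : ∀ t, t ≤ T → zstar < c ⬝ᵥ x t := fun t ht =>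
    lt_of_le_of_ne (hge t) (fun h => hcon t ht h.symm)
  have hanti : Antitone (fun t => c ⬝ᵥ x t) := antitone_nat_of_succ_le hmono
  -- contraction over several steps
  have hstep : ∀ a i : ℕ, a + i ≤ T →
      c ⬝ᵥ x (a + i) - zstar ≤ (1 - ρ) ^ i * (c ⬝ᵥ x a - zstar) := by
    intro a i
    induction i with
    | zero => intro _; simp
    | succ i ih =>
      intro hi
      have h1 := ih (by omega)
      have h2 := hcontr (a + i) (hpos (a + i) (by omega))
      have h3 : (0:ℝ) ≤ 1 - ρ := by linarith
      calc c ⬝ᵥ x (a + (i + 1)) - zstar = c ⬝ᵥ x ((a + i) + 1) - zstar := by ring_nf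
        _ ≤ (1 - ρ) * (c ⬝ᵥ x (a + i) - zstar) := h2
        _ ≤ (1 - ρ) * ((1 - ρ) ^ i * (c ⬝ᵥ x a - zstar)) :=
            mul_le_mul_of_nonneg_left h1 h3
        _ = (1 - ρ) ^ (i + 1) * (c ⬝ᵥ x a - zstar) := by ring
  -- key contraction bound
  have hNρ : Real.log ((m : ℝ) * γ / δ) ≤ (N : ℝ) * ρ := by
    have h1 : M * (γ ^ 2 / δ ^ 2) * Real.log ((m : ℝ) * γ / δ) ≤ (N : ℝ) :=
      Nat.le_ceil _
    have h2 : M * (γ ^ 2 / δ ^ 2) * ρ = 1 := by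
      rw [hρdef]; field_simp
    nlinarith
  have hcontrN : (1 - ρ) ^ N < δ / ((m : ℝ) * γ) := by
    have h1 : 1 - ρ < Real.exp (-ρ) := by
      have := Real.add_one_lt_exp (x := -ρ) (ne_of_lt (by linarith : -ρ < 0))
      linarith
    have h2 : (1 - ρ) ^ N < Real.exp (-ρ) ^ N := by
      apply pow_lt_pow_left₀ h1 (by linarith) (by omega)
    have h3 : Real.exp (-ρ) ^ N = Real.exp ((N : ℝ) * (-ρ)) :=
      (Real.exp_nat_mul _ N).symm
    have h4 : Real.exp ((N : ℝ) * (-ρ)) ≤ Real.exp (-Real.log ((m : ℝ) * γ / δ)) := by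
      apply Real.exp_le_exp.mpr; nlinarith
    have h5 : Real.exp (-Real.log ((m : ℝ) * γ / δ)) = δ / ((m : ℝ) * γ) := by
      rw [Real.exp_neg, Real.exp_log (by positivity)]
      rw [inv_div]
    calc (1 - ρ) ^ N < Real.exp (-ρ) ^ N := h2
      _ = Real.exp ((N : ℝ) * (-ρ)) := h3
      _ ≤ Real.exp (-Real.log ((m : ℝ) * γ / δ)) := h4
      _ = δ / ((m : ℝ) * γ) := h5
  -- main induction: at each phase one more variable is killed forever
  have main : ∀ k, k ≤ n - m → ∃ K : Finset (Fin n), K.card = k ∧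
      (∀ j ∈ K, 0 < sstar j) ∧
      (∀ j ∈ K, ∀ t, k * N ≤ t → t ≤ T → x t j = 0) := by
    intro k
    induction k with
    | zero => intro _; exact ⟨∅, by simp, by simp, by simp⟩
    | succ k ih =>
      intro hk1
      obtain ⟨K, hKcard, hKs, hKkill⟩ := ih (by omega)
      set t0 : ℕ := k * N with ht0def
      have ht0T : t0 ≤ T := by
        rw [hTdef, ht0def]; exact Nat.mul_le_mul_right N (by omega)
      have ht1T : t0 + N ≤ T := by
        rw [hTdef, ht0def]
        calc k * N + N = (k + 1) * N := by ring
          _ ≤ (n - m) * N := Nat.mul_le_mul_right N hk1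
      have hgpos : 0 < c ⬝ᵥ x t0 - zstar := sub_pos.mpr (hpos t0 ht0T)
      set S : Finset (Fin n) := Finset.univ.filter (fun j => 0 < x t0 j) with hSdef
      have hScard : S.card = m := (hnd (x t0) (hbfs t0)).1
      have hSne : S.Nonempty := Finset.card_pos.mp (by omega)
      obtain ⟨j, hjS, hjmax⟩ := Finset.exists_max_image S sstar hSne
      have hjpos : 0 < x t0 j := (Finset.mem_filter.mp hjS).2
      -- upper bound on gap via the max dual slack
      have hub : c ⬝ᵥ x t0 - zstar ≤ (m : ℝ) * γ * sstar j := by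
        have e1 : c ⬝ᵥ x t0 - zstar = sstar ⬝ᵥ x t0 := by
          rw [hgap t0]; ring
        have e2 : sstar ⬝ᵥ x t0 = ∑ j' ∈ S, sstar j' * x t0 j' := by
          refine (Finset.sum_subset (Finset.subset_univ S) ?_).symm
          intro j' _ hj'
          have : ¬ 0 < x t0 j' := by
            intro h; exact hj' (Finset.mem_filter.mpr ⟨Finset.mem_univ _, h⟩)
          have : x t0 j' = 0 := le_antisymm (not_lt.mp this) ((hbfs t0).2 j')
          rw [this, mul_zero]
        have e3 : ∑ j' ∈ S, sstar j' * x t0 j' ≤ S.card • (sstar j * γ) := by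
          apply Finset.sum_le_card_nsmul
          intro j' hj'
          have h1 : x t0 j' ≤ γ :=
            ((hnd (x t0) (hbfs t0)).2 j' (Finset.mem_filter.mp hj').2).2
          have h2 : sstar j' ≤ sstar j := hjmax j' hj'
          have h3 : 0 ≤ x t0 j' := (hbfs t0).2 j'
          nlinarith [hs j']
        rw [e1, e2]
        calc ∑ j' ∈ S, sstar j' * x t0 j' ≤ S.card • (sstar j * γ) := e3
          _ = (m : ℝ) * γ * sstar j := by rw [hScard, nsmul_eq_mul]; ring
      have hsj : 0 < sstar j := by
        by_contra h
        push_neg at h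
        nlinarith [mul_pos hm0' hγ]
      have hjK : j ∉ K := by
        intro hjmem
        have := hKkill j hjmem t0 le_rfl ht0T
        rw [this] at hjpos; exact lt_irrefl 0 hjpos
      -- j is killed from time (k+1)*N onwards
      have hkill : ∀ t, (k + 1) * N ≤ t → t ≤ T → x t j = 0 := by
        intro t ht1 ht2
        by_contra hne
        have hxt : 0 < x t j := lt_of_le_of_ne ((hbfs t).2 j) (Ne.symm hne)
        have hδx : δ ≤ x t j := ((hnd (x t) (hbfs t)).2 j hxt).1
        -- lower bound on the gap at time t
        have hlb : δ * sstar j ≤ c ⬝ᵥ x t - zstar := by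
          have e1 : c ⬝ᵥ x t - zstar = sstar ⬝ᵥ x t := by rw [hgap t]; ring
          have e2 : sstar j * x t j ≤ sstar ⬝ᵥ x t := by
            exact Finset.single_le_sum
              (f := fun j' => sstar j' * x t j')
              (fun j' _ => mul_nonneg (hs j') ((hbfs t).2 j')) (Finset.mem_univ j)
          have : δ * sstar j ≤ sstar j * x t j := by nlinarith
          linarith [e1.symm ▸ le_trans this e2]
        -- upper bound on the gap at time t
        have hub2 : c ⬝ᵥ x t - zstar ≤ (1 - ρ) ^ N * (c ⬝ᵥ x t0 - zstar) := by
          have h1 : c ⬝ᵥ x t ≤ c ⬝ᵥ x (t0 + N) := by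
            apply hanti
            have he : t0 + N = (k + 1) * N := by rw [ht0def]; ring
            omega
          have h2 := hstep t0 N ht1T
          linarith
        have hfin : (1 - ρ) ^ N * (c ⬝ᵥ x t0 - zstar) < δ * sstar j := by
          calc (1 - ρ) ^ N * (c ⬝ᵥ x t0 - zstar)
              < (δ / ((m : ℝ) * γ)) * (c ⬝ᵥ x t0 - zstar) := by
                apply mul_lt_mul_of_pos_right hcontrN hgpos
            _ ≤ (δ / ((m : ℝ) * γ)) * ((m : ℝ) * γ * sstar j) := by
                apply mul_le_mul_of_nonneg_left hub (by positivity)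
            _ = δ * sstar j := by field_simp
        linarith
      refine ⟨insert j K, ?_, ?_, ?_⟩
      · rw [Finset.card_insert_of_notMem hjK, hKcard]
      · intro j' hj'
        rcases Finset.mem_insert.mp hj' with h | h
        · rw [h]; exact hsj
        · exact hKs j' h
      · intro j' hj' t ht1 ht2
        rcases Finset.mem_insert.mp hj' with h | h
        · rw [h]; exact hkill t ht1 ht2
        · exact hKkill j' h t (le_trans (Nat.mul_le_mul_right N (by omega)) ht1) ht2
  -- conclude
  obtain ⟨K, hKcard, hKs, hKkill⟩ := main (n - m) le_rfl
  have hTkill : ∀ j ∈ K, x T j = 0 := fun j hj => hKkill j hj T le_rfl le_rfl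
  set S : Finset (Fin n) := Finset.univ.filter (fun j => 0 < x T j) with hSdef
  have hScard : S.card = m := (hnd (x T) (hbfs T)).1
  have hKS : K ⊆ Sᶜ := by
    intro j hj
    rw [Finset.mem_compl, hSdef, Finset.mem_filter]
    push_neg
    intro _
    rw [hTkill j hj]
  have hKeq : K = Sᶜ := by
    apply Finset.eq_of_subset_of_card_le hKS
    rw [Finset.card_compl, Fintype.card_fin, hScard, hKcard]
  -- the optimal solution
  obtain ⟨xs, ⟨hAxs, hxs0⟩, hzeq⟩ := hz.1
  have hsxs : sstar ⬝ᵥ xs = 0 := by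
    have := gap_formula A b c ystar sstar hdual xs hAxs
    rw [hby, ← hzeq] at this
    linarith
  have hxszero : ∀ j, 0 < sstar j → xs j = 0 := by
    intro j hj
    have hterm : sstar j * xs j = 0 :=
      (Finset.sum_eq_zero_iff_of_nonneg
        (fun j' _ => mul_nonneg (hs j') (hxs0 j'))).mp hsxs j (Finset.mem_univ j)
    rcases mul_eq_zero.mp hterm with h | h
    · exact absurd h (ne_of_gt hj)
    · exact h
  -- the basis of x T
  obtain ⟨⟨β, hβ, hu, hval, hzero⟩, hnn⟩ := hbfs T
  have hSβ : S ⊆ Finset.univ.image β := by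
    intro j hj
    have hjpos : 0 < x T j := (Finset.mem_filter.mp hj).2
    by_contra hnotin
    have : j ∉ Set.range β := by
      intro ⟨k, hk⟩
      exact hnotin (Finset.mem_image.mpr ⟨k, Finset.mem_univ k, hk⟩)
    rw [hzero j this] at hjpos
    exact lt_irrefl 0 hjpos
  have hSeq : S = Finset.univ.image β := by
    apply Finset.eq_of_subset_of_card_le hSβ
    rw [Finset.card_image_of_injective _ hβ, Finset.card_univ, Fintype.card_fin, hScard]
  -- xs is supported on range β
  have hxsoff : ∀ j, j ∉ Set.range β → xs j = 0 := by
    intro j hj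
    have hjS : j ∉ S := by
      rw [hSeq]
      intro hmem
      obtain ⟨k, _, hk⟩ := Finset.mem_image.mp hmem
      exact hj ⟨k, hk⟩
    have hjK : j ∈ K := by rw [hKeq]; exact Finset.mem_compl.mpr hjS
    exact hxszero j (hKs j hjK)
  have hxsβ : xs ∘ β = (A.submatrix id β)⁻¹.mulVec b :=
    inv_basis_vec A b β hβ hu xs hxsoff hAxs
  have hxseq : xs = x T := by
    funext j
    by_cases hj : j ∈ Set.range β
    · obtain ⟨k, rfl⟩ := hj
      have h1 : xs (β k) = (A.submatrix id β)⁻¹.mulVec b k := congrFun hxsβ k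
      rw [h1, ← hval k]
    · rw [hxsoff j hj, hzero j hj]
  have : c ⬝ᵥ x T = zstar := by rw [← hxseq, ← hzeq]
  exact hcon T le_rfl this
end

section
/- Let B = {i_1, …, i_m} be a feasible basis of the standard-form LP with BFS x (so x_{i_k} = (A_B⁻¹b)_k ≥ 0 and x_j = 0 for j ∉ B). Let j_s ∉ B be a nonbasic index, let ā = A_B⁻¹·A_{·j_s} ∈ ℝ^m (where A_{·j_s} is column j_s of A), and suppose ā_k > 0 for at least one k. Set θ = min{ x_{i_k}/ā_k : ā_k > 0 }, and define x' ∈ ℝ^n by x'_{j_s} = θ, x'_{i_k} = x_{i_k} − ā_k·θ for k = 1,…,m, and x'_j = 0 for all other indices j. Then A·x' = b, x' ≥ 0, and c·x' − c·x = c̄_s·θ, where c̄_s = c_{j_s} − A_{·j_s}ᵀ·(A_Bᵀ)⁻¹·c_B is the reduced cost of x_{j_s}. -/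
open Matrix

lemma sum_support_aux {m n : ℕ} {β : Fin m → Fin n} (hβ : Function.Injective β)
    {js : Fin n} (hjs : js ∉ Set.range β) (w : Fin n → ℝ)
    (hw : ∀ j, j ∉ Set.range β → j ≠ js → w j = 0) :
    ∑ j, w j = (∑ k, w (β k)) + w js := by
  classical
  have hdisj : Disjoint (Finset.univ.image β) ({js} : Finset (Fin n)) := by
    simp only [Finset.disjoint_singleton_right, Finset.mem_image]
    rintro ⟨k, -, rfl⟩
    exact hjs ⟨k, rfl⟩
  have hsub : (Finset.univ.image β) ∪ {js} ⊆ Finset.univ := Finset.subset_univ _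
  rw [← Finset.sum_subset hsub]
  · rw [Finset.sum_union hdisj, Finset.sum_image (fun a _ b _ h => hβ h),
      Finset.sum_singleton]
  · intro j _ hj
    simp only [Finset.mem_union, Finset.mem_image, Finset.mem_singleton, not_or] at hj
    refine hw j ?_ hj.2
    rintro ⟨k, rfl⟩
    exact hj.1 ⟨k, Finset.mem_univ k, rfl⟩

/-- **Correctness of one pivot step (Section 2.2).** Starting from the BFS `x` of the
feasible basis `β`, let `j_s` be a nonbasic index with entering column `ā = A_B⁻¹ A_{·j_s}`
having a positive entry, let `θ = min{x_{i_k}/ā_k : ā_k > 0}` be the minimum ratio, and let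
`x'` be the point after the pivot. Then `x'` is feasible and the objective changes by
exactly `c̄_s · θ`, where `c̄_s` is the reduced cost of the entering variable. -/
theorem pivot_step_correct
    {m n : ℕ} (A : Matrix (Fin m) (Fin n) ℝ) (b : Fin m → ℝ) (c : Fin n → ℝ)
    (β : Fin m → Fin n) (hβ : Function.Injective β)
    (hB : IsUnit (A.submatrix id β))
    (x : Fin n → ℝ)
    (hxB : ∀ k, x (β k) = (A.submatrix id β)⁻¹.mulVec b k)
    (hxN : ∀ j, j ∉ Set.range β → x j = 0)
    (hx0 : ∀ j, 0 ≤ x j)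
    (js : Fin n) (hjs : js ∉ Set.range β)
    (abar : Fin m → ℝ) (habar : abar = (A.submatrix id β)⁻¹.mulVec (fun i => A i js))
    (hpos : ∃ k, 0 < abar k)
    (θ : ℝ) (hθ : IsLeast {v : ℝ | ∃ k, 0 < abar k ∧ v = x (β k) / abar k} θ)
    (x' : Fin n → ℝ)
    (hx'js : x' js = θ)
    (hx'B : ∀ k, x' (β k) = x (β k) - abar k * θ)
    (hx'N : ∀ j, j ∉ Set.range β → j ≠ js → x' j = 0) :
    A.mulVec x' = b ∧ (∀ j, 0 ≤ x' j) ∧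
      c ⬝ᵥ x' - c ⬝ᵥ x =
        (c js - (fun i => A i js) ⬝ᵥ
          ((A.submatrix id β).transpose⁻¹.mulVec (fun k => c (β k)))) * θ := by
  classical
  set B := A.submatrix id β with hBdef
  have hBdet : IsUnit B.det := (Matrix.isUnit_iff_isUnit_det B).mp hB
  have hBB : B * B⁻¹ = 1 := Matrix.mul_nonsing_inv B hBdet
  have hθ0 : 0 ≤ θ := by
    obtain ⟨k, hk, hkeq⟩ := hθ.1
    rw [hkeq]
    exact div_nonneg (hx0 _) hk.le
  have hBcol : B.mulVec abar = fun i => A i js := by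
    rw [habar, Matrix.mulVec_mulVec, hBB, Matrix.one_mulVec]
  have hBxb : B.mulVec (fun k => x (β k)) = b := by
    have h : (fun k => x (β k)) = B⁻¹.mulVec b := funext hxB
    rw [h, Matrix.mulVec_mulVec, hBB, Matrix.one_mulVec]
  refine ⟨?_, ?_, ?_⟩
  · -- A x' = b
    funext i
    have hc1 : ∑ k, A i (β k) * abar k = A i js := congrFun hBcol i
    have hc2 : ∑ k, A i (β k) * x (β k) = b i := congrFun hBxb i
    have hsum := sum_support_aux hβ hjs (fun j => A i j * x' j)
      (fun j hj hjne => by simp only [hx'N j hj hjne, mul_zero])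
    have hAx' : A.mulVec x' i = ∑ j, A i j * x' j := rfl
    beta_reduce at hsum
    have hterm : ∀ k, A i (β k) * x' (β k)
        = A i (β k) * x (β k) - (A i (β k) * abar k) * θ := fun k => by
      rw [hx'B k]; ring
    rw [hAx', hsum, hx'js,
      Finset.sum_congr rfl (fun k _ => hterm k), Finset.sum_sub_distrib,
      ← Finset.sum_mul, hc1, hc2]
    ring
  · -- nonnegativity
    intro j
    by_cases hjr : j ∈ Set.range β
    · obtain ⟨k, rfl⟩ := hjr
      rw [hx'B k, sub_nonneg]
      rcases le_or_gt (abar k) 0 with h | h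
      · exact le_trans (mul_nonpos_of_nonpos_of_nonneg h hθ0) (hx0 _)
      · have := hθ.2 ⟨k, h, rfl⟩
        calc abar k * θ ≤ abar k * (x (β k) / abar k) :=
              mul_le_mul_of_nonneg_left this h.le
          _ = x (β k) := by field_simp
    · by_cases hje : j = js
      · rw [hje, hx'js]; exact hθ0
      · rw [hx'N j hjr hje]
  · -- objective change
    have hxjs : x js = 0 := hxN js hjs
    have hsum' := sum_support_aux hβ hjs (fun j => c j * x' j)
      (fun j hj hjne => by simp only [hx'N j hj hjne, mul_zero])
    have hsum := sum_support_aux hβ hjs (fun j => c j * x j)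
      (fun j hj _ => by simp only [hxN j hj, mul_zero])
    have hred : (fun i => A i js) ⬝ᵥ (B.transpose⁻¹.mulVec (fun k => c (β k)))
        = ∑ k, c (β k) * abar k := by
      rw [← Matrix.transpose_nonsing_inv, Matrix.mulVec_transpose,
        dotProduct_comm, ← Matrix.dotProduct_mulVec, ← habar]
      rfl
    beta_reduce at hsum' hsum
    have hdx' : c ⬝ᵥ x' = ∑ j, c j * x' j := rfl
    have hdx : c ⬝ᵥ x = ∑ j, c j * x j := rfl
    rw [hdx', hdx, hsum', hsum, hred, hx'js, hxjs,
      Finset.sum_congr rfl (fun k (_ : k ∈ Finset.univ) => by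
        rw [hx'B k] : ∀ k ∈ Finset.univ, c (β k) * x' (β k) = c (β k) * (x (β k) - abar k * θ)),
      ]
    rw [Finset.sum_congr rfl (fun k _ => by ring :
      ∀ k ∈ Finset.univ, c (β k) * (x (β k) - abar k * θ) = c (β k) * x (β k) - (c (β k) * abar k) * θ)]
    rw [Finset.sum_sub_distrib, ← Finset.sum_mul]
    ring
end
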